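/- Let X be a metric space equipped with a convex bicombing, let C ⊆ X be a compact convex subset, let E ⊆ C be an extremal subset of C, and let φ : E → ℝ be a continuous convex function. Then the set E_φ = { e ∈ E : φ(e) = max_{x ∈ E} φ(x) } of maximizers of φ on E is an extremal subset of C. -/

import Mathlib

open Set

/-- A convex bicombing on a metric space `X`: for each pair of points `x, y` a
continuous path `path x y : [0,1] → X` from `x` to `y`, with `path x x ≡ x`,
such that distances between paths are convex functions of the parameter. -/
structure ConvexBicombing (X : Type*) [MetricSpace X] where
  path : X → X → ℝ → X
  continuousOn : ∀ x y : X, ContinuousOn (path x y) (Icc 0 1)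
  path_zero : ∀ x y : X, path x y 0 = x
  path_one : ∀ x y : X, path x y 1 = y
  path_self : ∀ x : X, ∀ t ∈ Icc (0:ℝ) 1, path x x t = x
  dist_convexOn : ∀ x y x' y' : X,
    ConvexOn ℝ (Icc (0:ℝ) 1) (fun t => dist (path x y t) (path x' y' t))

/-- A set is convex with respect to the bicombing if it contains the path
between any two of its points. -/
def ConvexBicombing.IsConvexSet {X : Type*} [MetricSpace X] (B : ConvexBicombing X)
    (C : Set X) : Prop :=
  ∀ x ∈ C, ∀ y ∈ C, ∀ t ∈ Icc (0:ℝ) 1, B.path x y t ∈ C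

/-- `E` is an extremal subset of the convex set `C`: it is closed, nonempty,
contained in `C`, and whenever a path between points of `C` meets `E` at an
interior parameter, the whole path lies in `E`. -/
def ConvexBicombing.IsExtremal {X : Type*} [MetricSpace X] (B : ConvexBicombing X)
    (C E : Set X) : Prop :=
  IsClosed E ∧ E.Nonempty ∧ E ⊆ C ∧
    ∀ x ∈ C, ∀ y ∈ C, (∃ t ∈ Ioo (0:ℝ) 1, B.path x y t ∈ E) →
      ∀ s ∈ Icc (0:ℝ) 1, B.path x y s ∈ E

/-!
Let `x, y ∈ C` and suppose the point `[x,y](t)`, `0 < t < 1`, maximizes `φ` on `E`. By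
extremality of `E` the whole path `[x,y]` lies in `E`, so `t ↦ φ([x,y](t))` is a convex function
on `[0,1]` attaining its maximum at an interior point; such a function is constant, hence every
point of the path is a maximizer. Closedness of the maximizer set comes from continuity of `φ` on
the closed set `E`, and nonemptiness from compactness of `E ⊆ C`.
-/

theorem ConvexOn.eq_of_isMaxOn_of_mem_Ioo {𝕜 β : Type*} [Field 𝕜] [LinearOrder 𝕜]
    [IsStrictOrderedRing 𝕜] [AddCommGroup β] [LinearOrder β] [IsOrderedCancelAddMonoid β]
    [Module 𝕜 β] [PosSMulStrictMono 𝕜 β] {f : 𝕜 → β} {a b t : 𝕜}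
    (hf : ConvexOn 𝕜 (Icc a b) f) (ht : t ∈ Ioo a b) (hmax : IsMaxOn f (Icc a b) t) :
    ∀ s ∈ Icc a b, f s = f t := by
  intro s hs
  have hab : a ≤ b := hs.1.trans hs.2
  refine le_antisymm (hmax hs) ?_
  rcases le_or_gt s t with hst | hts
  · exact hf.le_left_of_right_le'' hs (right_mem_Icc.2 hab) hst ht.2 (hmax (right_mem_Icc.2 hab))
  · exact hf.le_right_of_left_le'' (left_mem_Icc.2 hab) hs ht.1 hts.le (hmax (left_mem_Icc.2 hab))

theorem ContinuousOn.isClosed_setOf_isMaxOn {α β : Type*} [TopologicalSpace α]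
    [TopologicalSpace β] [Preorder β] [ClosedIciTopology β] {f : α → β} {s : Set α}
    (hf : ContinuousOn f s) (hs : IsClosed s) : IsClosed {x ∈ s | ∀ y ∈ s, f y ≤ f x} := by
  have hclosed : IsClosed (⋂ y ∈ s, Ici (f y)) := isClosed_biInter fun _ _ => isClosed_Ici
  convert hf.preimage_isClosed_of_isClosed hs hclosed using 1
  ext x
  simp

theorem ConvexBicombing.endpoints_mem_of_path_mem {X : Type*} [MetricSpace X]
    (B : ConvexBicombing X) {E : Set X} {x y : X} (h : ∀ s ∈ Icc (0:ℝ) 1, B.path x y s ∈ E) :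
    x ∈ E ∧ y ∈ E :=
  ⟨B.path_zero x y ▸ h 0 (left_mem_Icc.2 zero_le_one),
    B.path_one x y ▸ h 1 (right_mem_Icc.2 zero_le_one)⟩

theorem maximizers_extremal_general {X : Type*} [MetricSpace X]
    (B : ConvexBicombing X) (C : Set X) (hC : IsCompact C)
    (E : Set X) (hE : B.IsExtremal C E) (φ : X → ℝ)
    (hcont : ContinuousOn φ E)
    (hφconv : ∀ x ∈ E, ∀ y ∈ E, (∀ t ∈ Icc (0:ℝ) 1, B.path x y t ∈ E) →
      ConvexOn ℝ (Icc (0:ℝ) 1) (fun t => φ (B.path x y t))) :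
    B.IsExtremal C {e ∈ E | ∀ x ∈ E, φ x ≤ φ e} := by
  obtain ⟨hEclosed, hEne, hEC, hEext⟩ := hE
  refine ⟨hcont.isClosed_setOf_isMaxOn hEclosed, ?_, fun e he => hEC he.1, ?_⟩
  · obtain ⟨e, he, hmax⟩ := (hC.of_isClosed_subset hEclosed hEC).exists_isMaxOn hEne hcont
    exact ⟨e, he, fun z hz => hmax hz⟩
  · rintro x hx y hy ⟨t, ht, hpE, hpmax⟩ s hs
    have hpath : ∀ u ∈ Icc (0:ℝ) 1, B.path x y u ∈ E := hEext x hx y hy ⟨t, ht, hpE⟩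
    obtain ⟨hxE, hyE⟩ := B.endpoints_mem_of_path_mem hpath
    have hconst := (hφconv x hxE y hyE hpath).eq_of_isMaxOn_of_mem_Ioo ht
      (fun u hu => hpmax _ (hpath u hu)) s hs
    exact ⟨hpath s hs, fun z hz => (hpmax z hz).trans hconst.ge⟩

/-- The set of maximizers of a continuous convex function on an extremal
subset of a compact convex set is again an extremal subset. -/
theorem maximizers_extremal {X : Type*} [MetricSpace X]
    (B : ConvexBicombing X) (C : Set X) (hC : IsCompact C) (hCconv : B.IsConvexSet C)
    (E : Set X) (hE : B.IsExtremal C E) (φ : X → ℝ)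
    (hcont : ContinuousOn φ E)
    (hφconv : ∀ x ∈ E, ∀ y ∈ E, (∀ t ∈ Icc (0:ℝ) 1, B.path x y t ∈ E) →
      ConvexOn ℝ (Icc (0:ℝ) 1) (fun t => φ (B.path x y t))) :
    B.IsExtremal C {e ∈ E | ∀ x ∈ E, φ x ≤ φ e} :=
  maximizers_extremal_general B C hC E hE φ hcont hφconv
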